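/- Let A = a₀ + a₁e₁ + a₂e₂ + a₃e₃ + a₁₂e₁₂ + a₁₃e₁₃ + a₂₃e₂₃ + a₁₂₃I be a multivector in Cl(0,3). Then the product A · reverse(A) · involute(A) · involute(reverse(A)) equals the scalar ((a₀ - a₁₂₃)² + (a₃ + a₁₂)² + (a₂ - a₁₃)² + (a₁ + a₂₃)²) · ((a₀ + a₁₂₃)² + (a₃ - a₁₂)² + (a₂ + a₁₃)² + (a₁ - a₂₃)²) · 1. -/

import Mathlib

open Real CliffordAlgebra

noncomputable section

/-- The quadratic form of signature (0,3): `Q(x) = -(x₁² + x₂² + x₃²)`. -/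
def Q03 : QuadraticForm ℝ (Fin 3 → ℝ) := QuadraticMap.weightedSumSquares ℝ ![-1, -1, -1]

/-- The real Clifford algebra Cl(0,3). -/
abbrev Cl03 := CliffordAlgebra Q03

/-- The canonical (module) topology on the finite-dimensional real algebra Cl(0,3). -/
instance : TopologicalSpace Cl03 := moduleTopology ℝ Cl03

/-- The orthonormal generators `e₁, e₂, e₃` (indexed here by `0, 1, 2`). -/
def e (i : Fin 3) : Cl03 := ι Q03 (Pi.single i 1)

/-- The pseudoscalar `I = e₁e₂e₃`. -/
def I3 : Cl03 := e 0 * e 1 * e 2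

/-- The exponential `exp M = ∑ₖ Mᵏ/k!` in Cl(0,3). -/
def expCl (M : Cl03) : Cl03 := ∑' n : ℕ, (n.factorial : ℝ)⁻¹ • M ^ n

/-- `atan2 y x` is the argument in `(-π, π]` of the complex number `x + iy`. -/
def atan2 (y x : ℝ) : ℝ := Complex.arg ⟨x, y⟩

/-!
`B = A * reverse A` is fixed by reversion, which in Cl(0,3) forces it to be a scalar plus a vector,
`B = s + v`. As `involute` is multiplicative, the determinant is
`B * involute B = (s + v)(s - v) = s² - v² = s² + |v|²`. The factorisation of `s² + |v|²` into two
sums of four squares reflects `Cl(0,3) ≅ ℍ ⊕ ℍ`: the factors are the quaternion norms of the two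
components `(1 ± I)/2 · A`.
-/

namespace CliffordAlgebra

variable {R M : Type*} [CommRing R] [AddCommGroup M] [Module R M] {Q : QuadraticForm R M}

theorem algebraMap_add_ι_mul_involute (s : R) (v : M) :
    (algebraMap R _ s + ι Q v) * involute (algebraMap R _ s + ι Q v) =
      algebraMap R _ (s ^ 2 - Q v) := by
  rw [map_add, AlgHom.commutes, involute_ι, ← sub_eq_add_neg, map_sub, pow_two, map_mul,
    ← ι_sq_scalar]
  exact (Commute.mul_self_sub_mul_self_eq (Algebra.commute_algebraMap_left s (ι Q v))).symm

end CliffordAlgebra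

theorem Q03_apply (v : Fin 3 → ℝ) : Q03 v = -(v 0 ^ 2 + v 1 ^ 2 + v 2 ^ 2) := by
  simp only [Q03, QuadraticMap.weightedSumSquares_apply, Fin.sum_univ_three, Matrix.cons_val,
    zsmul_eq_mul, Int.cast_neg, Int.cast_one]
  ring

theorem Q03_vecCons (x y z : ℝ) : Q03 ![x, y, z] = -(x ^ 2 + y ^ 2 + z ^ 2) :=
  Q03_apply _

theorem ι_Q03_vecCons (x y z : ℝ) : ι Q03 ![x, y, z] = x • e 0 + y • e 1 + z • e 2 := by
  simp only [e, ← map_smul, ← map_add]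
  congr 1
  ext i
  fin_cases i <;> simp

theorem e_mul_self (i : Fin 3) : e i * e i = -1 := by
  rw [e, ι_sq_scalar, Q03_apply]
  fin_cases i <;> simp

theorem e_mul_comm {i j : Fin 3} (h : i ≠ j) : e j * e i = -(e i * e j) := by
  refine ι_mul_ι_comm_of_isOrtho ?_
  rw [QuadraticMap.IsOrtho, Q03_apply, Q03_apply, Q03_apply]
  fin_cases i <;> fin_cases j <;> simp_all

theorem e_mul_e_mul_self (i : Fin 3) (x : Cl03) : e i * (e i * x) = -x := by
  rw [← mul_assoc, e_mul_self, neg_one_mul]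

theorem e_mul_e_mul_comm {i j : Fin 3} (h : i ≠ j) (x : Cl03) :
    e j * (e i * x) = -(e i * (e j * x)) := by
  rw [← mul_assoc, e_mul_comm h, neg_mul, mul_assoc]

theorem reverse_e (i : Fin 3) : reverse (e i) = e i := reverse_ι _

theorem mul_reverse_eq_algebraMap_add_ι (a0 a1 a2 a3 a12 a13 a23 a123 : ℝ) (A : Cl03)
    (hA : A = algebraMap ℝ Cl03 a0 + (a1 • e 0 + a2 • e 1 + a3 • e 2) +
      (a12 • (e 0 * e 1) + a13 • (e 0 * e 2) + a23 • (e 1 * e 2)) + a123 • I3) :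
    A * reverse A =
      algebraMap ℝ Cl03 (a0 ^ 2 - a1 ^ 2 - a2 ^ 2 - a3 ^ 2 + a12 ^ 2 + a13 ^ 2 + a23 ^ 2 - a123 ^ 2) +
        ι Q03 ![2 * (a0 * a1 - a2 * a12 - a3 * a13 + a23 * a123),
          2 * (a0 * a2 + a1 * a12 - a3 * a23 - a13 * a123),
          2 * (a0 * a3 + a1 * a13 + a2 * a23 + a12 * a123)] := by
  subst hA
  simp only [ι_Q03_vecCons, I3, map_add, map_smul, reverse.map_one, reverse.map_mul, reverse_e,
    Algebra.algebraMap_eq_smul_one, mul_add, add_mul, smul_mul_assoc, mul_smul_comm, mul_assoc,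
    one_mul, mul_one, mul_neg, neg_mul, smul_neg, neg_neg, e_mul_e_mul_self, e_mul_self,
    e_mul_e_mul_comm (i := 0) (j := 1) (by decide), e_mul_comm (i := 0) (j := 1) (by decide),
    e_mul_e_mul_comm (i := 0) (j := 2) (by decide), e_mul_comm (i := 0) (j := 2) (by decide),
    e_mul_e_mul_comm (i := 1) (j := 2) (by decide), e_mul_comm (i := 1) (j := 2) (by decide)]
  match_scalars <;> ring

/-- the determinant `A·Ã·Â·ÂÃ` of a multivector in Cl(0,3) is a scalar. -/
theorem determinant_Cl03
    (a0 a1 a2 a3 a12 a13 a23 a123 : ℝ) (A : Cl03)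
    (hA : A = algebraMap ℝ Cl03 a0 + (a1 • e 0 + a2 • e 1 + a3 • e 2) +
      (a12 • (e 0 * e 1) + a13 • (e 0 * e 2) + a23 • (e 1 * e 2)) + a123 • I3) :
    A * reverse A * involute A * involute (reverse A) =
      algebraMap ℝ Cl03
        (((a0 - a123) ^ 2 + (a3 + a12) ^ 2 + (a2 - a13) ^ 2 + (a1 + a23) ^ 2) *
          ((a0 + a123) ^ 2 + (a3 - a12) ^ 2 + (a2 + a13) ^ 2 + (a1 - a23) ^ 2)) := by
  rw [mul_assoc (A * reverse A), ← map_mul, mul_reverse_eq_algebraMap_add_ι _ _ _ _ _ _ _ _ A hA,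
    algebraMap_add_ι_mul_involute, Q03_vecCons]
  congr 1
  ring
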